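/- Let C be a binary self-complementary code of length n whose set of occurring nonzero distances is {n/2−α, n/2, n/2+α, n}, where α is an integer with 0 < α < n/2. If 3n − 4α² − 2 > 0, then |C| ≤ ⌊2n(n² − 4α²)/(3n − 4α² − 2)⌋. -/

import Mathlib

/-!
Send a word `x` to its `±1` sign vector, so that `⟨x, y⟩ = n - 2 d(x, y)`. Closing the distance
set under `d ↦ n - d` (self-complementarity) forces `n` to be even, and then
`f(t) = t⁴ - 4α²t²` vanishes at every inner product except `⟨x, x⟩ = n` and `⟨x, x + 1⟩ = -n`,
so `∑_{x,y ∈ C} f(⟨x, y⟩) = 2n²(n² - 4α²)|C|`. Writing the second and fourth moments of the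
inner products as sums of squares of the moment tensors `∑_x x_i x_j` and `∑_x x_i x_j x_k x_l`
gives `M₄ ≥ (3n - 2) M₂` and `M₂ ≥ n|C|²`, whence `2n²(n² - 4α²)|C| ≥ (3n - 4α² - 2) n |C|²`.
-/

open Matrix

section Moments

variable {κ ι R : Type*} [Fintype ι]

theorem dotProduct_sq_eq_dotProduct_tensor [CommSemiring R] (a b : ι → R) :
    (a ⬝ᵥ b) ^ 2 = (fun q : ι × ι => a q.1 * a q.2) ⬝ᵥ (fun q => b q.1 * b q.2) := by
  simp only [dotProduct, sq, Finset.sum_mul_sum, Fintype.sum_prod_type]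
  exact Finset.sum_congr rfl fun i _ => Finset.sum_congr rfl fun j _ => by ring

theorem sum_sum_dotProduct_sq [CommSemiring R] (s : Finset κ) (v : κ → ι → R) :
    ∑ x ∈ s, ∑ y ∈ s, (v x ⬝ᵥ v y) ^ 2 = ∑ i, ∑ j, (∑ x ∈ s, v x i * v x j) ^ 2 := by
  calc ∑ x ∈ s, ∑ y ∈ s, (v x ⬝ᵥ v y) ^ 2
      = ∑ x ∈ s, ∑ y ∈ s, ∑ i, ∑ j, v x i * v x j * (v y i * v y j) := by
        simp only [dotProduct, sq, Finset.sum_mul_sum]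
        exact Finset.sum_congr rfl fun _ _ => Finset.sum_congr rfl fun _ _ =>
          Finset.sum_congr rfl fun _ _ => Finset.sum_congr rfl fun _ _ => by ring
    _ = ∑ i, ∑ j, ∑ x ∈ s, ∑ y ∈ s, v x i * v x j * (v y i * v y j) := by
        simp_rw [Finset.sum_comm (s := s) (t := Finset.univ)]
    _ = _ := by simp only [sq, Finset.sum_mul_sum]

theorem sum_sum_dotProduct_pow_four [CommSemiring R] (s : Finset κ) (v : κ → ι → R) :
    ∑ x ∈ s, ∑ y ∈ s, (v x ⬝ᵥ v y) ^ 4 =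
      ∑ i, ∑ j, ∑ k, ∑ l, (∑ x ∈ s, v x i * v x j * v x k * v x l) ^ 2 := by
  have h : ∀ x y, (v x ⬝ᵥ v y) ^ 4 =
      ((fun q : ι × ι => v x q.1 * v x q.2) ⬝ᵥ (fun q => v y q.1 * v y q.2)) ^ 2 := by
    intro x y; rw [← dotProduct_sq_eq_dotProduct_tensor]; ring
  simp only [h, sum_sum_dotProduct_sq, Fintype.sum_prod_type, mul_assoc]

variable [CommRing R] [LinearOrder R] [IsStrictOrderedRing R]

theorem card_mul_card_sq_le_sum_sum_dotProduct_sq (s : Finset κ) (v : κ → ι → R)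
    (hv : ∀ x ∈ s, ∀ i, v x i ^ 2 = 1) :
    Fintype.card ι * (s.card : R) ^ 2 ≤ ∑ x ∈ s, ∑ y ∈ s, (v x ⬝ᵥ v y) ^ 2 := by
  have hdiag : ∀ i, ∑ x ∈ s, v x i * v x i = s.card := fun i => by
    rw [Finset.card_eq_sum_ones, Nat.cast_sum, Nat.cast_one]
    exact Finset.sum_congr rfl fun x hx => by rw [← sq, hv x hx i]
  rw [sum_sum_dotProduct_sq, ← nsmul_eq_mul, ← Finset.card_univ, ← Finset.sum_const]
  gcongr with i
  calc (s.card : R) ^ 2 = (∑ x ∈ s, v x i * v x i) ^ 2 := by rw [hdiag]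
    _ ≤ ∑ j, (∑ x ∈ s, v x i * v x j) ^ 2 :=
      Finset.single_le_sum (f := fun j => (∑ x ∈ s, v x i * v x j) ^ 2)
        (fun j _ => sq_nonneg _) (Finset.mem_univ i)

variable [DecidableEq ι]

/-- Inclusion–exclusion over the index patterns `i = j`, `k = i`, `k = j`: each contributes
`n ∑ B²`, and their common part `i = j = k` contributes `∑ B²`. -/
theorem three_mul_card_sub_two_mul_sum_sq_le (B : ι → ι → R) (T : ι → ι → ι → ι → R)
    (h₁ : ∀ i k l, T i i k l = B k l) (h₂ : ∀ i j l, T i j i l = B j l)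
    (h₃ : ∀ i j l, T i j j l = B i l) :
    (3 * Fintype.card ι - 2) * ∑ i, ∑ j, B i j ^ 2 ≤ ∑ i, ∑ j, ∑ k, ∑ l, T i j k l ^ 2 := by
  set n : R := (Fintype.card ι : R)
  set Q : R := ∑ i, ∑ j, B i j ^ 2
  have e₁ : ∑ i, ∑ j, ∑ k, ∑ l, (if i = j then T i j k l ^ 2 else 0) = n * Q := by
    simp [Finset.sum_ite_irrel, h₁, n, Q]
  have e₂ : ∑ i, ∑ j, ∑ k, ∑ l, (if k = i then T i j k l ^ 2 else 0) = n * Q := by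
    simp [Finset.sum_ite_irrel, h₂, n, Q]
  have e₃ : ∑ i, ∑ j, ∑ k, ∑ l, (if k = j then T i j k l ^ 2 else 0) = n * Q := by
    simp [Finset.sum_ite_irrel, h₃, n, Q, ← Finset.mul_sum]
  have e₄ : ∑ i, ∑ j, ∑ k, ∑ l, (if i = j ∧ k = i then T i j k l ^ 2 else 0) = Q := by
    simp [Finset.sum_ite_irrel, ite_and, h₁, Q]
  calc (3 * n - 2) * Q = n * Q + n * Q + n * Q - 2 * Q := by ring
    _ = ∑ i, ∑ j, ∑ k, ∑ l, ((if i = j then T i j k l ^ 2 else 0)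
          + (if k = i then T i j k l ^ 2 else 0) + (if k = j then T i j k l ^ 2 else 0)
          - 2 * (if i = j ∧ k = i then T i j k l ^ 2 else 0)) := by
        simp only [Finset.sum_add_distrib, Finset.sum_sub_distrib, ← Finset.mul_sum, e₁, e₂, e₃, e₄]
    _ ≤ ∑ i, ∑ j, ∑ k, ∑ l, T i j k l ^ 2 := by
        gcongr with i _ j _ k _ l _
        have := sq_nonneg (T i j k l)
        by_cases hij : i = j <;> by_cases hki : k = i <;> by_cases hkj : k = j <;> simp_all
        all_goals linarith

theorem three_mul_card_sub_two_mul_sum_sum_dotProduct_sq_le (s : Finset κ) (v : κ → ι → R)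
    (hv : ∀ x ∈ s, ∀ i, v x i ^ 2 = 1) :
    (3 * Fintype.card ι - 2) * ∑ x ∈ s, ∑ y ∈ s, (v x ⬝ᵥ v y) ^ 2 ≤
      ∑ x ∈ s, ∑ y ∈ s, (v x ⬝ᵥ v y) ^ 4 := by
  rw [sum_sum_dotProduct_sq, sum_sum_dotProduct_pow_four]
  refine three_mul_card_sub_two_mul_sum_sq_le _ _ (fun i k l => ?_) (fun i j l => ?_)
    (fun i j l => ?_)
  · exact Finset.sum_congr rfl fun x hx => by linear_combination (v x k * v x l) * hv x hx i
  · exact Finset.sum_congr rfl fun x hx => by linear_combination (v x j * v x l) * hv x hx i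
  · exact Finset.sum_congr rfl fun x hx => by linear_combination (v x i * v x l) * hv x hx j

end Moments

namespace BinaryCode

variable {ι : Type*}

def signVec (x : ι → ZMod 2) : ι → ℤ := fun i => if x i = 0 then 1 else -1

theorem signVec_sq (x : ι → ZMod 2) (i : ι) : signVec x i ^ 2 = 1 := by
  unfold signVec; split_ifs <;> norm_num

variable [Fintype ι]

theorem hammingDist_add_one (x y : ι → ZMod 2) :
    hammingDist x (y + 1) = Fintype.card ι - hammingDist x y := by
  have h : ∀ a b : ZMod 2, a ≠ b + 1 ↔ ¬a ≠ b := by decide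
  simp only [hammingDist, Pi.add_apply, Pi.one_apply, h]
  rw [← Finset.card_univ,
    ← Finset.card_filter_add_card_filter_not (s := Finset.univ) (fun i => x i ≠ y i)]
  omega

theorem eq_add_one_of_hammingDist_eq_card {x y : ι → ZMod 2}
    (h : hammingDist x y = Fintype.card ι) : y = x + 1 := by
  rw [← hammingDist_eq_zero, hammingDist_add_one, hammingDist_comm, h, Nat.sub_self]

theorem add_one_ne_self [Nonempty ι] (x : ι → ZMod 2) : x + 1 ≠ x := by
  rw [ne_comm, ← hammingDist_pos, hammingDist_add_one, hammingDist_self]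
  exact Fintype.card_pos

theorem signVec_dotProduct_signVec (x y : ι → ZMod 2) :
    signVec x ⬝ᵥ signVec y = Fintype.card ι - 2 * hammingDist x y := by
  have h : ∀ i, signVec x i * signVec y i = 1 - 2 * if x i ≠ y i then 1 else 0 := by
    intro i
    have key : ∀ a b : ZMod 2, ((if a = 0 then (1 : ℤ) else -1) * if b = 0 then 1 else -1)
        = 1 - 2 * if a ≠ b then 1 else 0 := by decide
    exact key (x i) (y i)
  simp only [dotProduct, h, Finset.sum_sub_distrib, ← Finset.mul_sum, Finset.sum_boole, hammingDist]
  simp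

def distanceSet {β : Type*} [DecidableEq β] (C : Finset (ι → β)) : Set ℕ :=
  {i | ∃ x ∈ C, ∃ y ∈ C, x ≠ y ∧ hammingDist x y = i}

theorem card_sub_mem_distanceSet {C : Finset (ι → ZMod 2)} (hsc : ∀ x ∈ C, x + 1 ∈ C) {d : ℕ}
    (hd : d ∈ distanceSet C) (hlt : d < Fintype.card ι) : Fintype.card ι - d ∈ distanceSet C := by
  obtain ⟨x, hx, y, hy, -, rfl⟩ := hd
  refine ⟨x, hx, y + 1, hsc y hy, fun h => ?_, hammingDist_add_one x y⟩
  rw [h, hammingDist_comm, hammingDist_add_one, hammingDist_self] at hlt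
  omega

theorem even_of_distanceSet_eq {n α : ℕ} (hα : α < n / 2) {C : Finset (Fin n → ZMod 2)}
    (hsc : ∀ x ∈ C, x + 1 ∈ C) (hdist : distanceSet C = {n / 2 - α, n / 2, n / 2 + α, n}) :
    Even n := by
  have h₁ := card_sub_mem_distanceSet hsc (d := n / 2) (by simp [hdist])
    (by rw [Fintype.card_fin]; omega)
  have h₂ := card_sub_mem_distanceSet hsc (d := n / 2 - α) (by simp [hdist])
    (by rw [Fintype.card_fin]; omega)
  simp only [hdist, Fintype.card_fin, Set.mem_insert_iff, Set.mem_singleton_iff] at h₁ h₂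
  rw [Nat.even_iff]
  omega

theorem sum_annihilator_signVec_dotProduct {n α : ℕ} (hn : 0 < n) (heven : Even n)
    {C : Finset (Fin n → ZMod 2)} (hsc : ∀ x ∈ C, x + 1 ∈ C)
    (hdist : distanceSet C ⊆ {n / 2 - α, n / 2, n / 2 + α, n}) {x : Fin n → ZMod 2} (hx : x ∈ C) :
    ∑ y ∈ C, ((signVec x ⬝ᵥ signVec y) ^ 4 - 4 * α ^ 2 * (signVec x ⬝ᵥ signVec y) ^ 2) =
      2 * (n : ℤ) ^ 2 * ((n : ℤ) ^ 2 - 4 * α ^ 2) := by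
  have : Nonempty (Fin n) := ⟨⟨0, hn⟩⟩
  have hzero : ∀ y ∈ (C.erase x).erase (x + 1),
      (signVec x ⬝ᵥ signVec y) ^ 4 - 4 * α ^ 2 * (signVec x ⬝ᵥ signVec y) ^ 2 = 0 := by
    intro y hy
    simp only [Finset.mem_erase] at hy
    obtain ⟨hyx₁, hyx, hy⟩ := hy
    have hd := hdist ⟨x, hx, y, hy, Ne.symm hyx, rfl⟩
    have hdn : hammingDist x y ≠ n := fun h =>
      hyx₁ (eq_add_one_of_hammingDist_eq_card (by rw [h, Fintype.card_fin]))
    have hpos := hammingDist_pos.2 (Ne.symm hyx)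
    simp only [Set.mem_insert_iff, Set.mem_singleton_iff] at hd
    have hval : signVec x ⬝ᵥ signVec y = 2 * α ∨ signVec x ⬝ᵥ signVec y = 0 ∨
        signVec x ⬝ᵥ signVec y = -(2 * α) := by
      rw [signVec_dotProduct_signVec, Fintype.card_fin]
      obtain ⟨m, rfl⟩ := heven
      omega
    rcases hval with h | h | h <;> rw [h] <;> ring
  have hxx : signVec x ⬝ᵥ signVec x = n := by
    rw [signVec_dotProduct_signVec, hammingDist_self, Fintype.card_fin]; ring
  have hxx₁ : signVec x ⬝ᵥ signVec (x + 1) = -n := by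
    rw [signVec_dotProduct_signVec, hammingDist_add_one, hammingDist_self, Nat.sub_zero,
      Fintype.card_fin]
    ring
  rw [← Finset.add_sum_erase _ _ hx,
    ← Finset.add_sum_erase _ _ (Finset.mem_erase.2 ⟨add_one_ne_self x, hsc x hx⟩),
    Finset.sum_eq_zero hzero, hxx, hxx₁]
  ring

end BinaryCode

open BinaryCode

theorem stmt_11_general (n α : ℕ) (hα2 : α < n / 2)
    (C : Finset (Fin n → ZMod 2))
    (hsc : ∀ x ∈ C, x + 1 ∈ C)
    (hdist : {i : ℕ | ∃ x ∈ C, ∃ y ∈ C, x ≠ y ∧ hammingDist x y = i} =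
      {n / 2 - α, n / 2, n / 2 + α, n})
    (hpos : (0 : ℤ) < 3 * (n : ℤ) - 4 * (α : ℤ) ^ 2 - 2) :
    (C.card : ℤ) * (3 * (n : ℤ) - 4 * (α : ℤ) ^ 2 - 2) ≤
      2 * (n : ℤ) * ((n : ℤ) ^ 2 - 4 * (α : ℤ) ^ 2) := by
  have hn : 0 < n := by omega
  have hC : 0 < C.card := by
    obtain ⟨x, hx, -⟩ : n ∈ distanceSet C := by simp [distanceSet, hdist]
    exact Finset.card_pos.2 ⟨x, hx⟩
  have hv : ∀ x ∈ C, ∀ i, signVec x i ^ 2 = 1 := fun x _ => signVec_sq x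
  have hmoment : ∑ x ∈ C, ∑ y ∈ C, (signVec x ⬝ᵥ signVec y) ^ 4
      - 4 * α ^ 2 * ∑ x ∈ C, ∑ y ∈ C, (signVec x ⬝ᵥ signVec y) ^ 2
      = C.card * (2 * (n : ℤ) ^ 2 * ((n : ℤ) ^ 2 - 4 * α ^ 2)) := by
    simp only [Finset.mul_sum, ← Finset.sum_sub_distrib]
    rw [Finset.sum_congr rfl fun x hx => sum_annihilator_signVec_dotProduct hn
      (even_of_distanceSet_eq hα2 hsc hdist) hsc hdist.subset hx]
    simp
  have h₄ := three_mul_card_sub_two_mul_sum_sum_dotProduct_sq_le C signVec hv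
  have h₂ := card_mul_card_sq_le_sum_sum_dotProduct_sq C signVec hv
  simp only [Fintype.card_fin] at h₂ h₄
  have key : ((n : ℤ) * C.card) * (C.card * (3 * n - 4 * α ^ 2 - 2)) ≤
      ((n : ℤ) * C.card) * (2 * n * (n ^ 2 - 4 * α ^ 2)) := by
    nlinarith [mul_le_mul_of_nonneg_left h₂ hpos.le]
  exact le_of_mul_le_mul_left key (by positivity)

theorem stmt_11 (n α : ℕ) (hα1 : 0 < α) (hα2 : α < n / 2)
    (C : Finset (Fin n → ZMod 2))
    (hsc : ∀ x ∈ C, x + 1 ∈ C)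
    (hdist : {i : ℕ | ∃ x ∈ C, ∃ y ∈ C, x ≠ y ∧ hammingDist x y = i} =
      {n / 2 - α, n / 2, n / 2 + α, n})
    (hpos : (0 : ℤ) < 3 * (n : ℤ) - 4 * (α : ℤ) ^ 2 - 2) :
    (C.card : ℤ) * (3 * (n : ℤ) - 4 * (α : ℤ) ^ 2 - 2) ≤
      2 * (n : ℤ) * ((n : ℤ) ^ 2 - 4 * (α : ℤ) ^ 2) :=
  stmt_11_general n α hα2 C hsc hdist hpos
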